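/- arXiv:1809.00963 — 5 statements merged into one kernel-verified Lean document; each statement's English description precedes it below -/
import Mathlib

section
/- Let G : B ⟶ C be a functor between groupoids that is a fibration of groupoids (i.e., for every object b' in B and every arrow β : c ⟶ G b' in C there exists an arrow α : b ⟶ b' in B with G α = β). Let F : A ⟶ B and H : A ⟶ C be functors with a natural isomorphism β : H ≅ F ⋙ G. Then there exists a functor F' : A ⟶ B with F' ⋙ G = H (strict equality) and a natural isomorphism α : F' ≅ F such that G applied to α equals β. -/
open CategoryTheory

/-- A functor between groupoids is a fibration of groupoids if every arrow into an
object of the form `G b'` lifts to an arrow into `b'`. -/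
def IsGrpdFibration {B C : Type*} [Groupoid B] [Groupoid C] (G : B ⥤ C) : Prop :=
  ∀ (b' : B) (c : C) (β : c ⟶ G.obj b'),
    ∃ (b : B) (α : b ⟶ b') (h : G.obj b = c), G.map α = eqToHom h ≫ β

/-! Lift each component `β.app a` to an arrow `e a : obj a ⟶ F.obj a`, invertible since `B` is
a groupoid, and let `F'` be `F` transported along these isomorphisms. Then `F' ⋙ G ≅ H` is the
identity on objects and its components are `eqToHom`s, which forces `F' ⋙ G = H` strictly;
whiskering `e` by `G` gives back `β` by construction. -/

namespace CategoryTheory.Functor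

variable {A B C : Type*} [Category A] [Category B] [Category C]
  {G : B ⥤ C} {F : A ⥤ B} {H : A ⥤ C} (β : H ≅ F ⋙ G)
  {obj : A → B} (e : ∀ a, obj a ≅ F.obj a) (hobj : ∀ a, G.obj (obj a) = H.obj a)
  (he : ∀ a, G.map (e a).hom = eqToHom (hobj a) ≫ β.hom.app a)
include he

theorem copyObj_comp_eq_of_map_hom_eq :
    F.copyObj obj (fun a => (e a).symm) ⋙ G = H :=
  ext_of_iso (isoWhiskerRight (F.isoCopyObj obj fun a => (e a).symm).symm G ≪≫ β.symm) hobj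
    fun a => by
      simp only [Iso.trans_hom, isoWhiskerRight_hom, Iso.symm_hom, NatTrans.comp_app,
        whiskerRight_app, isoCopyObj_inv_app, Iso.symm_inv]
      exact (Iso.comp_inv_eq (β.app a)).2 (he a)

theorem isoWhiskerRight_isoCopyObj_symm_of_map_hom_eq :
    isoWhiskerRight (F.isoCopyObj obj fun a => (e a).symm).symm G =
      eqToIso (copyObj_comp_eq_of_map_hom_eq β e hobj he) ≪≫ β := by
  ext a
  simp only [isoWhiskerRight_hom, whiskerRight_app, Iso.symm_hom, isoCopyObj_inv_app,
    Iso.symm_inv, Iso.trans_hom, eqToIso.hom, NatTrans.comp_app, eqToHom_app]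
  exact he a

end CategoryTheory.Functor

theorem stmt_3 {A B C : Type*} [Groupoid A] [Groupoid B] [Groupoid C]
    (G : B ⥤ C) (hG : IsGrpdFibration G)
    (F : A ⥤ B) (H : A ⥤ C) (β : H ≅ F ⋙ G) :
    ∃ (F' : A ⥤ B) (h : F' ⋙ G = H) (α : F' ≅ F),
      Functor.isoWhiskerRight α G = eqToIso h ≪≫ β := by
  choose obj lift hobj hlift using fun a => hG (F.obj a) (H.obj a) (β.hom.app a)
  let e a : obj a ≅ F.obj a := asIso (lift a)
  exact ⟨_, Functor.copyObj_comp_eq_of_map_hom_eq β e hobj hlift, _,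
    Functor.isoWhiskerRight_isoCopyObj_symm_of_map_hom_eq β e hobj hlift⟩
end

section
/- Let B be a strictly associative and unital bigroupoid (associators and unitors are identities, every 1-cell f has a weak inverse f* with invertible unit i_f and counit e_f satisfying the triangle identities). Define u_f : f** ⟶ f as the composite f** ⟶ f** ∘ f* ∘ f ⟶ f using e_f⁻¹ (whiskered on the right) and e_{f*} (whiskered on the left). Then u_f whiskered appropriately satisfies: the composite 1 ⟶ f** ∘ f* ⟶ f ∘ f* given by e_{f*}⁻¹ followed by (u_f ∘ id) equals i_f, and the composite 1 ⟶ f* ∘ f** ⟶ f* ∘ f given by i_{f*} followed by (id ∘ u_f) equals e_f⁻¹. -/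
open CategoryTheory Bicategory

theorem stmt_9 {𝒷 : Type*} [Bicategory 𝒷] [Bicategory.Strict 𝒷] {A B : 𝒷}
    (f : A ⟶ B) (fs : B ⟶ A) (fss : A ⟶ B)
    -- counits and units for f and for f* (invertible):
    (e_f : f ≫ fs ≅ 𝟙 A) (i_f : 𝟙 B ≅ fs ≫ f)
    (e_fs : fs ≫ fss ≅ 𝟙 B) (i_fs : 𝟙 A ≅ fss ≫ fs)
    -- triangle identities for f and f*:
    (tri_f : (f ◁ i_f.hom) ≫ (α_ f fs f).inv ≫ (e_f.hom ▷ f)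
      = (ρ_ f).hom ≫ (λ_ f).inv)
    (tri_fs : (fs ◁ i_fs.hom) ≫ (α_ fs fss fs).inv ≫ (e_fs.hom ▷ fs)
      = (ρ_ fs).hom ≫ (λ_ fs).inv) :
    -- with u_f : f** ⟶ f the double-dual comparison 2-cell:
    ∀ u_f : fss ⟶ f,
      u_f = (λ_ fss).inv ≫ (e_f.inv ▷ fss) ≫ (α_ f fs fss).hom ≫
        (f ◁ e_fs.hom) ≫ (ρ_ f).hom →
      (e_fs.inv ≫ (fs ◁ u_f) = i_f.hom ∧ i_fs.hom ≫ (u_f ▷ fs) = e_f.inv) := by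
  intro u hu
  have claim2 : i_fs.hom ≫ (u ▷ fs) = e_f.inv := by
    subst hu
    calc i_fs.hom ≫
        (((λ_ fss).inv ≫ (e_f.inv ▷ fss) ≫ (α_ f fs fss).hom ≫
          (f ◁ e_fs.hom) ≫ (ρ_ f).hom) ▷ fs)
        = 𝟙 _ ⊗≫ (𝟙 A ◁ i_fs.hom ≫ e_f.inv ▷ (fss ≫ fs)) ⊗≫
            f ◁ (e_fs.hom ▷ fs) ⊗≫ 𝟙 _ := by bicategory
      _ = 𝟙 _ ⊗≫ (e_f.inv ▷ 𝟙 A ≫ (f ≫ fs) ◁ i_fs.hom) ⊗≫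
            f ◁ (e_fs.hom ▷ fs) ⊗≫ 𝟙 _ := by rw [whisker_exchange]
      _ = e_f.inv ⊗≫ f ◁ ((fs ◁ i_fs.hom) ≫ (α_ fs fss fs).inv ≫
            (e_fs.hom ▷ fs)) ⊗≫ 𝟙 _ := by bicategory
      _ = e_f.inv := by rw [tri_fs]; bicategory
  refine ⟨?_, claim2⟩
  have h2 : u ▷ fs ≫ e_f.hom = i_fs.inv := by
    have : u ▷ fs = i_fs.inv ≫ e_f.inv := by
      rw [← claim2, Iso.inv_hom_id_assoc]
    rw [this, Category.assoc, Iso.inv_hom_id, Category.comp_id]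
  have tri_fs' : (e_fs.inv ▷ fs) ≫ (α_ fs fss fs).hom ≫ (fs ◁ i_fs.inv)
      = (λ_ fs).hom ≫ (ρ_ fs).inv := by
    have h : whiskerLeftIso fs i_fs ≪≫ (α_ fs fss fs).symm ≪≫ whiskerRightIso e_fs fs
        = ρ_ fs ≪≫ (λ_ fs).symm := Iso.ext (by simpa using tri_fs)
    simpa using congrArg Iso.inv h
  have L2 : (e_fs.inv ≫ fs ◁ u) ▷ fs ⊗≫ fs ◁ e_f.hom
      = (λ_ fs).hom ≫ (ρ_ fs).inv := by
    calc (e_fs.inv ≫ fs ◁ u) ▷ fs ⊗≫ fs ◁ e_f.hom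
        = 𝟙 _ ⊗≫ e_fs.inv ▷ fs ⊗≫ fs ◁ (u ▷ fs ≫ e_f.hom) ⊗≫ 𝟙 _ := by bicategory
      _ = 𝟙 _ ⊗≫ e_fs.inv ▷ fs ⊗≫ fs ◁ i_fs.inv ⊗≫ 𝟙 _ := by rw [h2]
      _ = (λ_ fs).hom ≫ (ρ_ fs).inv := by rw [← tri_fs']; bicategory
  symm
  calc i_f.hom
      = 𝟙 _ ⊗≫ i_f.hom ⊗≫
          ((e_fs.inv ≫ fs ◁ u) ▷ fs ⊗≫ fs ◁ e_f.hom) ▷ f ⊗≫ 𝟙 _ := by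
        rw [L2]; bicategory
    _ = 𝟙 _ ⊗≫ (𝟙 B ◁ i_f.hom ≫ (e_fs.inv ≫ fs ◁ u) ▷ (fs ≫ f)) ⊗≫
          fs ◁ (e_f.hom ▷ f) ⊗≫ 𝟙 _ := by bicategory
    _ = 𝟙 _ ⊗≫ ((e_fs.inv ≫ fs ◁ u) ▷ 𝟙 B ≫ (fs ≫ f) ◁ i_f.hom) ⊗≫
          fs ◁ (e_f.hom ▷ f) ⊗≫ 𝟙 _ := by rw [whisker_exchange]
    _ = (e_fs.inv ≫ fs ◁ u) ⊗≫
          fs ◁ ((f ◁ i_f.hom) ≫ (α_ f fs f).inv ≫ (e_f.hom ▷ f)) ⊗≫ 𝟙 _ := by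
        bicategory
    _ = e_fs.inv ≫ fs ◁ u := by rw [tri_f]; bicategory
end

section
/- Let B be a strictly associative and unital bigroupoid with double-dual comparison 2-cells u_f : f** ⟶ f as above. Then for every 1-cell f, the composite (f*** ∘ f**) ⟶ (f* ∘ f) ⟶ 1 given by (u_{f*} ∘ u_f) followed by e_f equals e_{f**} : f*** ∘ f** ⟶ 1. -/
/-!
Write `u_f` and `u_{f*}` out. In `(u_f ▷ f***) ≫ (f ◁ u_{f*})` the counit `e_{f*}` used by `u_f`
meets the inverse `e_{f*}⁻¹` used by `u_{f*}` and they cancel, leaving, up to coherence,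
`e_f⁻¹ ▷ (f** ≫ f***)` followed by `(f ≫ f*) ◁ e_{f**}`. By the interchange law this is `e_{f**}`
followed by `e_f⁻¹`, and composing with `e_f` gives `e_{f**}`.
-/

open CategoryTheory Bicategory

namespace CategoryTheory.Bicategory

variable {B : Type*} [Bicategory B] {a b : B}

/-- With `e = e_f` and `η = e_{f*}`, this is the comparison `u_f : f** ⟶ f`. -/
def dualComparison {f : a ⟶ b} {g : b ⟶ a} {h : a ⟶ b} (e : f ≫ g ≅ 𝟙 a)
    (η : g ≫ h ⟶ 𝟙 b) : h ⟶ f :=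
  (λ_ h).inv ≫ (e.inv ▷ h) ≫ (α_ f g h).hom ≫ (f ◁ η) ≫ (ρ_ f).hom

theorem leftUnitor_inv_comp_inv_whiskerRight_comp_whiskerLeft_comp_hom {x j : a ⟶ a}
    (e : x ≅ 𝟙 a) (η : j ⟶ 𝟙 a) :
    (λ_ j).inv ≫ (e.inv ▷ j) ≫ (x ◁ η) ≫ (ρ_ x).hom ≫ e.hom = η := by
  rw [← whisker_exchange_assoc, ← leftUnitor_inv_naturality_assoc, rightUnitor_naturality_assoc]
  simp [unitors_inv_equal]

theorem dualComparison_whiskerRight_comp_whiskerLeft_dualComparison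
    {f : a ⟶ b} {g : b ⟶ a} {h : a ⟶ b} {k : b ⟶ a}
    (e : f ≫ g ≅ 𝟙 a) (e' : g ≫ h ≅ 𝟙 b) (η : h ≫ k ⟶ 𝟙 a) :
    (dualComparison e e'.hom ▷ k) ≫ (f ◁ dualComparison e' η) =
      (λ_ (h ≫ k)).inv ≫ (e.inv ▷ (h ≫ k)) ≫ ((f ≫ g) ◁ η) ≫ (ρ_ (f ≫ g)).hom := by
  calc _ = (λ_ _).inv ≫ e.inv ▷ (h ≫ k) ⊗≫ f ◁ (e'.hom ≫ e'.inv) ▷ k ⊗≫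
          (f ≫ g) ◁ η ≫ (ρ_ _).hom := by
        simp only [dualComparison]
        bicategory
    _ = _ := by
        simp only [Iso.hom_inv_id, id_whiskerRight, whiskerLeft_id]
        bicategory

theorem dualComparison_whiskerRight_comp_whiskerLeft_dualComparison_comp_hom
    {f : a ⟶ b} {g : b ⟶ a} {h : a ⟶ b} {k : b ⟶ a}
    (e : f ≫ g ≅ 𝟙 a) (e' : g ≫ h ≅ 𝟙 b) (η : h ≫ k ⟶ 𝟙 a) :
    (dualComparison e e'.hom ▷ k) ≫ (f ◁ dualComparison e' η) ≫ e.hom = η := by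
  rw [reassoc_of% dualComparison_whiskerRight_comp_whiskerLeft_dualComparison]
  exact leftUnitor_inv_comp_inv_whiskerRight_comp_whiskerLeft_comp_hom e η

end CategoryTheory.Bicategory

theorem stmt_10_general {𝒷 : Type*} [Bicategory 𝒷] {A B : 𝒷}
    (f : A ⟶ B) (fs : B ⟶ A) (fss : A ⟶ B) (fsss : B ⟶ A)
    -- counits and units for f, f* and f** (invertible):
    (e_f : f ≫ fs ≅ 𝟙 A)
    (e_fs : fs ≫ fss ≅ 𝟙 B)
    (e_fss : fss ≫ fsss ≅ 𝟙 A) :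
    -- with u_f : f** ⟶ f and u_{f*} : f*** ⟶ f* the double-dual comparison 2-cells:
    ∀ (u_f : fss ⟶ f) (u_fs : fsss ⟶ fs),
      u_f = (λ_ fss).inv ≫ (e_f.inv ▷ fss) ≫ (α_ f fs fss).hom ≫
        (f ◁ e_fs.hom) ≫ (ρ_ f).hom →
      u_fs = (λ_ fsss).inv ≫ (e_fs.inv ▷ fsss) ≫ (α_ fs fss fsss).hom ≫
        (fs ◁ e_fss.hom) ≫ (ρ_ fs).hom →
      (u_f ▷ fsss) ≫ (f ◁ u_fs) ≫ e_f.hom = e_fss.hom := by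
  rintro _ _ rfl rfl
  exact dualComparison_whiskerRight_comp_whiskerLeft_dualComparison_comp_hom e_f e_fs e_fss.hom

theorem stmt_10 {𝒷 : Type*} [Bicategory 𝒷] [Bicategory.Strict 𝒷] {A B : 𝒷}
    (f : A ⟶ B) (fs : B ⟶ A) (fss : A ⟶ B) (fsss : B ⟶ A)
    -- counits and units for f, f* and f** (invertible):
    (e_f : f ≫ fs ≅ 𝟙 A) (i_f : 𝟙 B ≅ fs ≫ f)
    (e_fs : fs ≫ fss ≅ 𝟙 B) (i_fs : 𝟙 A ≅ fss ≫ fs)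
    (e_fss : fss ≫ fsss ≅ 𝟙 A) (i_fss : 𝟙 B ≅ fsss ≫ fss)
    -- triangle identities:
    (tri_f : (f ◁ i_f.hom) ≫ (α_ f fs f).inv ≫ (e_f.hom ▷ f)
      = (ρ_ f).hom ≫ (λ_ f).inv)
    (tri_fs : (fs ◁ i_fs.hom) ≫ (α_ fs fss fs).inv ≫ (e_fs.hom ▷ fs)
      = (ρ_ fs).hom ≫ (λ_ fs).inv)
    (tri_fss : (fss ◁ i_fss.hom) ≫ (α_ fss fsss fss).inv ≫ (e_fss.hom ▷ fss)
      = (ρ_ fss).hom ≫ (λ_ fss).inv) :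
    -- with u_f : f** ⟶ f and u_{f*} : f*** ⟶ f* the double-dual comparison 2-cells:
    ∀ (u_f : fss ⟶ f) (u_fs : fsss ⟶ fs),
      u_f = (λ_ fss).inv ≫ (e_f.inv ▷ fss) ≫ (α_ f fs fss).hom ≫
        (f ◁ e_fs.hom) ≫ (ρ_ f).hom →
      u_fs = (λ_ fsss).inv ≫ (e_fs.inv ▷ fsss) ≫ (α_ fs fss fsss).hom ≫
        (fs ◁ e_fss.hom) ≫ (ρ_ fs).hom →
      (u_f ▷ fsss) ≫ (f ◁ u_fs) ≫ e_f.hom = e_fss.hom :=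
  stmt_10_general f fs fss fsss e_f e_fs e_fss
end

section
/- Brown factorization lemma via path objects, 1-categorical version: let F : A ⟶ C be any functor between small groupoids. Then F factors as F = H ∘ G where G : A ⟶ B is fully faithful, essentially surjective, injective on objects, and admits a retraction P : B ⟶ A with P ∘ G = id which is a fully faithful essentially surjective isofibration, and H : B ⟶ C is an isofibration. (Take B to be the pullback of the source projection of the arrow groupoid C^I along F.) -/
open CategoryTheory

/-- A functor is an isofibration: every arrow into the image of an object lifts. -/
def IsIsofib {B C : Type*} [Category B] [Category C] (F : B ⥤ C) : Prop :=
  ∀ (b : B) (c : C) (γ : c ⟶ F.obj b),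
    ∃ (b' : B) (β : b' ⟶ b) (h : F.obj b' = c), F.map β = eqToHom h ≫ γ

variable {A C : Type*} [Groupoid A] [Groupoid C] (F : A ⥤ C)

/-- The strict pullback of the source projection of the arrow groupoid `C^I` along `F`,
realized as the comma category `F ↓ 𝟭 C` (objects: `a : A`, `c : C`, `f : F a ⟶ c`). -/
abbrev PathFactor := Comma F (𝟭 C)

/-- The functor `G : A ⥤ B` induced by `id_A` and the constant path on `F a`. -/
def pathInto : A ⥤ PathFactor F where
  obj a := { left := a, right := F.obj a, hom := 𝟙 (F.obj a) }
  map u := { left := u, right := F.map u, w := by simp }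

/-- The retraction `P : B ⥤ A`. -/
def pathRetr : PathFactor F ⥤ A := Comma.fst F (𝟭 C)

/-- The fibration `H : B ⥤ C`, evaluation at the target of the path. -/
def pathTgt : PathFactor F ⥤ C := Comma.snd F (𝟭 C)

/-!
Since `C` is a groupoid, every object `f : F a ⟶ c` of the comma category is isomorphic, via
`(𝟙 a, f)`, to the constant path `𝟙 (F a)`; so `pathInto F` and the projection `pathRetr F` are
mutually inverse equivalences. Isofibrations: a projection out of a comma category lifts an arrow
into one end by transporting the structure map along it, which for the target end needs the arrow
to be invertible.
-/

namespace CategoryTheory.Comma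

theorem isIsofib_fst {D E T : Type*} [Category D] [Category E] [Category T]
    (L : D ⥤ T) (R : E ⥤ T) : IsIsofib (Comma.fst L R) :=
  fun X d γ => ⟨⟨d, X.right, L.map γ ≫ X.hom⟩, ⟨γ, 𝟙 X.right, by simp⟩, rfl, by simp⟩

theorem isIsofib_snd {D E T : Type*} [Category D] [Groupoid E] [Category T]
    (L : D ⥤ T) (R : E ⥤ T) : IsIsofib (Comma.snd L R) :=
  fun X e γ => ⟨⟨X.left, e, X.hom ≫ R.map (Groupoid.inv γ)⟩, ⟨𝟙 X.left, γ, by simp⟩, rfl, by simp⟩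

end CategoryTheory.Comma

def pathIntoObjLeftIso (X : PathFactor F) : (pathInto F).obj X.left ≅ X :=
  Comma.isoMk (Iso.refl X.left) ((Groupoid.isoEquivHom (F.obj X.left) X.right).symm X.hom)
    (by dsimp [pathInto]; simp)

def pathFactorEquiv : A ≌ PathFactor F :=
  CategoryTheory.Equivalence.mk (pathInto F) (pathRetr F) (Iso.refl _)
    (NatIso.ofComponents (pathIntoObjLeftIso F) fun φ => by
      ext
      · show φ.left ≫ 𝟙 _ = 𝟙 _ ≫ φ.left
        simp
      · exact φ.w)

theorem stmt_15 :
    pathInto F ⋙ pathTgt F = F ∧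
    (pathInto F).Full ∧ (pathInto F).Faithful ∧ (pathInto F).EssSurj ∧
    Function.Injective (pathInto F).obj ∧
    pathInto F ⋙ pathRetr F = 𝟭 A ∧
    (pathRetr F).Full ∧ (pathRetr F).Faithful ∧ (pathRetr F).EssSurj ∧
    IsIsofib (pathRetr F) ∧
    IsIsofib (pathTgt F) := by
  have : (pathInto F).IsEquivalence := (pathFactorEquiv F).isEquivalence_functor
  have : (pathRetr F).IsEquivalence := (pathFactorEquiv F).isEquivalence_inverse
  exact ⟨rfl, inferInstance, inferInstance, inferInstance,
    fun _ _ h => congrArg Comma.left h, rfl, inferInstance, inferInstance, inferInstance,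
    Comma.isIsofib_fst F (𝟭 C), Comma.isIsofib_snd F (𝟭 C)⟩
end

section
/- Pullback stability of isofibrations and trivial fibrations of groupoids: if G : B ⟶ C is an isofibration (respectively, a surjective-on-objects equivalence) of small groupoids and H : D ⟶ C is any functor, then in the strict pullback square of groupoids the projection P : B ×_C D ⟶ D is an isofibration (respectively, a surjective-on-objects equivalence). -/
open CategoryTheory

variable {B C D : Type*} [Groupoid B] [Groupoid C] [Groupoid D]

/-- The strict pullback `B ×_C D` of `G : B ⥤ C` along `H : D ⥤ C`: objects are pairs
`(b, d)` with `G b = H d`. -/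
structure StrictPB (G : B ⥤ C) (H : D ⥤ C) where
  b : B
  d : D
  h : G.obj b = H.obj d

instance (G : B ⥤ C) (H : D ⥤ C) : Category (StrictPB G H) where
  Hom p q := { m : (p.b ⟶ q.b) × (p.d ⟶ q.d) //
    G.map m.1 = eqToHom p.h ≫ H.map m.2 ≫ eqToHom q.h.symm }
  id p := ⟨(𝟙 _, 𝟙 _), by simp⟩
  comp m n := ⟨(m.1.1 ≫ n.1.1, m.1.2 ≫ n.1.2), by
    rw [Functor.map_comp, m.2, n.2]; simp⟩
  id_comp m := Subtype.ext (Prod.ext (Category.id_comp _) (Category.id_comp _))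
  comp_id m := Subtype.ext (Prod.ext (Category.comp_id _) (Category.comp_id _))
  assoc m n o := Subtype.ext (Prod.ext (Category.assoc _ _ _) (Category.assoc _ _ _))

/-- The projection `B ×_C D ⥤ D`. -/
def StrictPB.proj (G : B ⥤ C) (H : D ⥤ C) : StrictPB G H ⥤ D where
  obj p := p.d
  map m := m.1.2
  map_id _ := rfl
  map_comp _ _ := rfl

namespace StrictPB

variable {G : B ⥤ C} {H : D ⥤ C}

theorem hom_ext {p q : StrictPB G H} {m n : p ⟶ q} (h₁ : m.1.1 = n.1.1) (h₂ : m.1.2 = n.1.2) :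
    m = n :=
  Subtype.ext (Prod.ext h₁ h₂)

theorem proj_isIsofib (hG : IsIsofib G) : IsIsofib (proj G H) := by
  intro p d δ
  obtain ⟨b', β, h, hβ⟩ := hG p.b (H.obj d) (H.map δ ≫ eqToHom p.h.symm)
  exact ⟨⟨b', d, h⟩, ⟨(β, δ), hβ⟩, rfl, (Category.id_comp δ).symm⟩

instance proj_full [G.Full] : (proj G H).Full where
  map_surjective {p q} δ :=
    ⟨⟨(G.preimage (eqToHom p.h ≫ H.map δ ≫ eqToHom q.h.symm), δ), G.map_preimage _⟩, rfl⟩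

instance proj_faithful [G.Faithful] : (proj G H).Faithful where
  map_injective {p q m n} (h₂ : m.1.2 = n.1.2) :=
    hom_ext (G.map_injective (by rw [m.2, n.2, h₂])) h₂

theorem proj_obj_surjective (hG : Function.Surjective G.obj) :
    Function.Surjective (proj G H).obj := fun d =>
  let ⟨b, hb⟩ := hG (H.obj d)
  ⟨⟨b, d, hb⟩, rfl⟩

end StrictPB

theorem stmt_16 (G : B ⥤ C) (H : D ⥤ C) :
    (IsIsofib G → IsIsofib (StrictPB.proj G H)) ∧
    ((IsIsofib G ∧ G.Full ∧ G.Faithful ∧ Function.Surjective G.obj) →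
      (IsIsofib (StrictPB.proj G H) ∧ (StrictPB.proj G H).Full ∧
        (StrictPB.proj G H).Faithful ∧ Function.Surjective (StrictPB.proj G H).obj)) := by
  refine ⟨StrictPB.proj_isIsofib, ?_⟩
  rintro ⟨hIsofib, hFull, hFaithful, hSurj⟩
  exact ⟨StrictPB.proj_isIsofib hIsofib, inferInstance, inferInstance,
    StrictPB.proj_obj_surjective hSurj⟩
end
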